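/- arXiv:2012.08212 — 6 statements merged into one kernel-verified Lean document; each statement's English description precedes it below -/
import Mathlib

section
/- Let n be a positive integer and let α ∈ ℂ^{n×n}, β = (β_{jkℓ}) ∈ ℂ^{n×n×n} be structure constants. Define a bilinear multiplication * on the complex vector space ℂ × ℂⁿ by (c,u)*(d,v) := (c·d + Σ_{j,k=1}^n α_{jk} u_j v_k, w), where w_r := c·v_r + d·u_r + Σ_{j,k=1}^n β_{jkr} u_j v_k for r = 1,…,n. Then * is associative (i.e. (x*y)*z = x*(y*z) for all x,y,z ∈ ℂ × ℂⁿ) if and only if for all j,k,s,r ∈ {1,…,n} both Σ_{ℓ=1}^n (α_{ℓs} β_{jkℓ} − α_{jℓ} β_{ksℓ}) = 0 and α_{jk} δ_{rs} − α_{ks} δ_{rj} + Σ_{ℓ=1}^n (β_{jkℓ} β_{ℓsr} − β_{ksℓ} β_{jℓr}) = 0, where δ denotes the Kronecker delta. -/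
/-!
The multiplication is bilinear and `(1, 0)` is a two-sided unit, so associativity only has to be
checked on triples of the vectors `(0, eⱼ)`. For these, `(0, eⱼ) * (0, eₖ) = (α j k, β j k ·)`, and
comparing `((0, eⱼ) * (0, eₖ)) * (0, eₛ)` with `(0, eⱼ) * ((0, eₖ) * (0, eₛ))` coordinatewise
gives exactly the two families of identities.
-/

/-- The bilinear multiplication on `ℂ × ℂⁿ` determined by structure constants `α`, `β`. -/
noncomputable def structMul {n : ℕ} (α : Matrix (Fin n) (Fin n) ℂ) (β : Fin n → Fin n → Fin n → ℂ)
    (x y : ℂ × (Fin n → ℂ)) : ℂ × (Fin n → ℂ) :=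
  (x.1 * y.1 + ∑ j, ∑ k, α j k * x.2 j * y.2 k,
   fun r => x.1 * y.2 r + y.1 * x.2 r + ∑ j, ∑ k, β j k r * x.2 j * y.2 k)

theorem LinearMap.assoc_of_basis {R M ι : Type*} [CommSemiring R] [AddCommMonoid M] [Module R M]
    (b : Module.Basis ι R M) (μ : M →ₗ[R] M →ₗ[R] M)
    (h : ∀ i j k, μ (μ (b i) (b j)) (b k) = μ (b i) (μ (b j) (b k))) (x y z : M) :
    μ (μ x y) z = μ x (μ y z) := by
  have : μ.compr₂ μ = (llcomp R M M M ∘ₗ μ).compl₂ μ :=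
    ext_basis b b fun i j => b.ext fun k => h i j k
  exact congr($this x y z)

section
variable {n : ℕ} (α : Matrix (Fin n) (Fin n) ℂ) (β : Fin n → Fin n → Fin n → ℂ)

theorem structMul_add_left (x x' y : ℂ × (Fin n → ℂ)) :
    structMul α β (x + x') y = structMul α β x y + structMul α β x' y := by
  ext <;> simp [structMul, add_mul, mul_add, Finset.sum_add_distrib] <;> ring

theorem structMul_smul_left (c : ℂ) (x y : ℂ × (Fin n → ℂ)) :
    structMul α β (c • x) y = c • structMul α β x y := by
  ext <;> simp [structMul, mul_add, Finset.mul_sum] <;> ring_nf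

theorem structMul_add_right (x y y' : ℂ × (Fin n → ℂ)) :
    structMul α β x (y + y') = structMul α β x y + structMul α β x y' := by
  ext <;> simp [structMul, add_mul, mul_add, Finset.sum_add_distrib] <;> ring

theorem structMul_smul_right (c : ℂ) (x y : ℂ × (Fin n → ℂ)) :
    structMul α β x (c • y) = c • structMul α β x y := by
  ext <;> simp [structMul, mul_add, Finset.mul_sum] <;> ring_nf

noncomputable def structMulBilin :
    (ℂ × (Fin n → ℂ)) →ₗ[ℂ] (ℂ × (Fin n → ℂ)) →ₗ[ℂ] ℂ × (Fin n → ℂ) :=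
  LinearMap.mk₂ ℂ (structMul α β) (structMul_add_left α β) (structMul_smul_left α β)
    (structMul_add_right α β) (structMul_smul_right α β)

theorem structMul_one_left (y : ℂ × (Fin n → ℂ)) : structMul α β (1, 0) y = y := by
  ext <;> simp [structMul]

theorem structMul_one_right (x : ℂ × (Fin n → ℂ)) : structMul α β x (1, 0) = x := by
  ext <;> simp [structMul]

theorem structMul_single_left (j : Fin n) (d : ℂ) (v : Fin n → ℂ) :
    structMul α β (0, Pi.single j 1) (d, v) =
      (∑ ℓ, α j ℓ * v ℓ, fun r => d * (if r = j then 1 else 0) + ∑ ℓ, v ℓ * β j ℓ r) := by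
  simp [structMul, Pi.single_apply, mul_comm]

theorem structMul_single_right (s : Fin n) (c : ℂ) (u : Fin n → ℂ) :
    structMul α β (c, u) (0, Pi.single s 1) =
      (∑ ℓ, α ℓ s * u ℓ, fun r => c * (if r = s then 1 else 0) + ∑ ℓ, u ℓ * β ℓ s r) := by
  simp [structMul, Pi.single_apply, mul_comm]

theorem structMul_single_single (j k : Fin n) :
    structMul α β (0, Pi.single j 1) (0, Pi.single k 1) = (α j k, fun r => β j k r) := by
  simp [structMul, Pi.single_apply]

theorem structMul_assoc_single_iff (j k s : Fin n) :
    structMul α β (structMul α β (0, Pi.single j 1) (0, Pi.single k 1)) (0, Pi.single s 1) =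
        structMul α β (0, Pi.single j 1) (structMul α β (0, Pi.single k 1) (0, Pi.single s 1)) ↔
      (∑ ℓ, (α ℓ s * β j k ℓ - α j ℓ * β k s ℓ)) = 0 ∧
        ∀ r, α j k * (if r = s then 1 else 0) - α k s * (if r = j then 1 else 0)
          + ∑ ℓ, (β j k ℓ * β ℓ s r - β k s ℓ * β j ℓ r) = 0 := by
  rw [structMul_single_single, structMul_single_single, structMul_single_right,
    structMul_single_left]
  simp only [Prod.mk.injEq, funext_iff, Finset.sum_sub_distrib, sub_add_sub_comm, sub_eq_zero]

theorem structMul_assoc_of_single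
    (h : ∀ j k s : Fin n, structMul α β (structMul α β (0, Pi.single j 1) (0, Pi.single k 1))
      (0, Pi.single s 1) =
        structMul α β (0, Pi.single j 1) (structMul α β (0, Pi.single k 1) (0, Pi.single s 1)))
    (x y z : ℂ × (Fin n → ℂ)) :
    structMul α β (structMul α β x y) z = structMul α β x (structMul α β y z) := by
  refine LinearMap.assoc_of_basis ((Module.Basis.singleton Unit ℂ).prod (Pi.basisFun ℂ (Fin n)))
    (structMulBilin α β) ?_ x y z
  rintro (_ | j) (_ | k) (_ | s) <;>
    simp [structMulBilin, Module.Basis.prod_apply, structMul_one_left, structMul_one_right, h]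

end

theorem structMul_associative_iff_general {n : ℕ}
    (α : Matrix (Fin n) (Fin n) ℂ) (β : Fin n → Fin n → Fin n → ℂ) :
    (∀ x y z : ℂ × (Fin n → ℂ),
        structMul α β (structMul α β x y) z = structMul α β x (structMul α β y z))
      ↔
    (∀ j k s r : Fin n,
        (∑ ℓ, (α ℓ s * β j k ℓ - α j ℓ * β k s ℓ)) = 0 ∧
        α j k * (if r = s then 1 else 0) - α k s * (if r = j then 1 else 0)
          + ∑ ℓ, (β j k ℓ * β ℓ s r - β k s ℓ * β j ℓ r) = 0) := by
  constructor
  · intro h j k s r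
    obtain ⟨h₁, h₂⟩ := (structMul_assoc_single_iff α β j k s).1 (h _ _ _)
    exact ⟨h₁, h₂ r⟩
  · intro h
    refine structMul_assoc_of_single α β fun j k s => (structMul_assoc_single_iff α β j k s).2 ?_
    exact ⟨(h j k s j).1, fun r => (h j k s r).2⟩

/-- the multiplication `structMul α β` is associative iff the structure
constants satisfy the two families of quadratic constraints. -/
theorem structMul_associative_iff {n : ℕ} (hn : 0 < n)
    (α : Matrix (Fin n) (Fin n) ℂ) (β : Fin n → Fin n → Fin n → ℂ) :
    (∀ x y z : ℂ × (Fin n → ℂ),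
        structMul α β (structMul α β x y) z = structMul α β x (structMul α β y z))
      ↔
    (∀ j k s r : Fin n,
        (∑ ℓ, (α ℓ s * β j k ℓ - α j ℓ * β k s ℓ)) = 0 ∧
        α j k * (if r = s then 1 else 0) - α k s * (if r = j then 1 else 0)
          + ∑ ℓ, (β j k ℓ * β ℓ s r - β k s ℓ * β j ℓ r) = 0) :=
  structMul_associative_iff_general α β
end

section
/- Let H be a nonzero complex Hilbert space and X_1,…,X_n bounded self-adjoint operators on H satisfying the algebraic structure X_j X_k = α_{jk}·I + Σ_{ℓ=1}^n β_{jkℓ}·X_ℓ for all j,k, where α ∈ ℂ^{n×n} is Hermitian and each section β_ℓ := (β_{jkℓ})_{j,k} ∈ ℂ^{n×n} is Hermitian. Set τ_ℓ := Tr β_ℓ (a real number) for ℓ = 1,…,n. Then Tr α + (1/4) Σ_{ℓ=1}^n τ_ℓ² ≥ 0, and for every k = 1,…,n the operator norm of X_k satisfies ‖X_k‖ ≤ (1/2)|τ_k| + √(Tr α + (1/4) Σ_{ℓ=1}^n τ_ℓ²). -/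
/-!
With `Y ℓ = X ℓ - (τ ℓ / 2) • 1` (self-adjoint, since `τ ℓ` is real) the diagonal structure
relations complete the square: `∑ ℓ, Y ℓ * Y ℓ = c • 1` with `c = Tr α + ¼ ∑ τ ℓ ^ 2`.
Pairing with a vector gives `∑ ℓ, ‖Y ℓ v‖ ^ 2 = c * ‖v‖ ^ 2`, so `c ≥ 0` on a nonzero space and
`‖Y k‖ ≤ √c`; the triangle inequality then adds back `|τ k| / 2`.
-/

open scoped InnerProductSpace

theorem Matrix.IsHermitian.ofReal_re_trace {n : Type*} [Fintype n] {A : Matrix n n ℂ}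
    (hA : A.IsHermitian) : ((A.trace.re : ℝ) : ℂ) = A.trace :=
  Complex.conj_eq_iff_re.mp <| by rw [← Complex.star_def, ← Matrix.trace_conjTranspose, hA.eq]

section

variable {ι 𝕜 A : Type*} [Fintype ι] [Field 𝕜] [Ring A] [Algebra 𝕜 A] {X : ι → A}

theorem sum_mul_self_eq_of_mul_self_eq (a : ι → 𝕜) (b : ι → ι → 𝕜)
    (h : ∀ j, X j * X j = a j • 1 + ∑ ℓ, b j ℓ • X ℓ) :
    ∑ j, X j * X j = (∑ j, a j) • 1 + ∑ ℓ, (∑ j, b j ℓ) • X ℓ := by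
  simp only [h, Finset.sum_add_distrib, Finset.sum_smul]
  rw [Finset.sum_comm]

theorem sum_sub_half_smul_one_mul_self [CharZero 𝕜] {s : 𝕜} {t : ι → 𝕜}
    (h : ∑ j, X j * X j = s • 1 + ∑ ℓ, t ℓ • X ℓ) :
    ∑ ℓ, (X ℓ - (t ℓ / 2) • 1) * (X ℓ - (t ℓ / 2) • 1) =
      (s + 1 / 4 * ∑ ℓ, t ℓ ^ 2) • (1 : A) := by
  have hsq : ∀ ℓ, (X ℓ - (t ℓ / 2) • 1) * (X ℓ - (t ℓ / 2) • 1) =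
      X ℓ * X ℓ - t ℓ • X ℓ + (1 / 4 * t ℓ ^ 2) • 1 := by
    intro ℓ
    simp only [sub_mul, mul_sub, smul_mul_assoc, mul_smul_comm, one_mul, mul_one]
    module
  simp only [hsq, Finset.sum_add_distrib, Finset.sum_sub_distrib, h, ← Finset.sum_smul,
    ← Finset.mul_sum]
  module

end

section

variable {𝕜 E ι : Type*} [RCLike 𝕜] [NormedAddCommGroup E] [InnerProductSpace 𝕜 E]
  [CompleteSpace E] [Fintype ι] {Y : ι → E →L[𝕜] E} {c : ℝ}

theorem sum_norm_apply_sq_eq_of_sum_mul_self_eq (hY : ∀ i, IsSelfAdjoint (Y i))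
    (hc : ∑ i, Y i * Y i = (c : 𝕜) • 1) (v : E) :
    ∑ i, ‖Y i v‖ ^ 2 = c * ‖v‖ ^ 2 := by
  have hterm : ∀ i, ‖Y i v‖ ^ 2 = RCLike.re ⟪v, (Y i * Y i) v⟫_𝕜 := fun i => by
    rw [← inner_self_eq_norm_sq (𝕜 := 𝕜)]
    exact congrArg RCLike.re ((hY i).isSymmetric v (Y i v))
  simp only [hterm, ← map_sum, ← inner_sum, ← sum_apply, hc,
    smul_apply, one_apply_eq_self, inner_smul_right,
    RCLike.re_ofReal_mul, inner_self_eq_norm_sq]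

theorem nonneg_of_sum_mul_self_eq [Nontrivial E] (hY : ∀ i, IsSelfAdjoint (Y i))
    (hc : ∑ i, Y i * Y i = (c : 𝕜) • 1) : 0 ≤ c := by
  obtain ⟨v, hv⟩ := exists_ne (0 : E)
  have hv2 : 0 < ‖v‖ ^ 2 := by positivity
  have := sum_norm_apply_sq_eq_of_sum_mul_self_eq hY hc v
  exact nonneg_of_mul_nonneg_left (this ▸ Finset.sum_nonneg fun i _ => sq_nonneg _) hv2

theorem norm_le_sqrt_of_sum_mul_self_eq (hY : ∀ i, IsSelfAdjoint (Y i))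
    (hc : ∑ i, Y i * Y i = (c : 𝕜) • 1) (k : ι) : ‖Y k‖ ≤ √c := by
  refine (Y k).opNorm_le_bound (Real.sqrt_nonneg c) fun v => ?_
  have hle : ‖Y k v‖ ^ 2 ≤ c * ‖v‖ ^ 2 := by
    rw [← sum_norm_apply_sq_eq_of_sum_mul_self_eq hY hc v]
    exact Finset.single_le_sum (f := fun i => ‖Y i v‖ ^ 2) (fun i _ => sq_nonneg _)
      (Finset.mem_univ k)
  calc ‖Y k v‖ = √(‖Y k v‖ ^ 2) := (Real.sqrt_sq (norm_nonneg _)).symm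
    _ ≤ √(c * ‖v‖ ^ 2) := Real.sqrt_le_sqrt hle
    _ = √c * ‖v‖ := by rw [Real.sqrt_mul' c (by positivity), Real.sqrt_sq (norm_nonneg _)]

end

/-- boundedness of the system variables.  If self-adjoint bounded operators
`X 1, …, X n` on a nonzero complex Hilbert space satisfy
`X j * X k = α j k • 1 + ∑ ℓ, β j k ℓ • X ℓ` with `α` and all sections `β_ℓ` Hermitian, and
`τ ℓ := Tr β_ℓ` (real numbers), then `Tr α + (1/4)∑ τ_ℓ² ≥ 0` and
`‖X k‖ ≤ |τ k|/2 + √(Tr α + (1/4)∑ τ_ℓ²)` for every `k`. -/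
theorem norm_bound_of_algebraic_structure
    {H : Type*} [NormedAddCommGroup H] [InnerProductSpace ℂ H] [CompleteSpace H]
    [Nontrivial H]
    {n : ℕ} (X : Fin n → (H →L[ℂ] H))
    (hsa : ∀ k, IsSelfAdjoint (X k))
    (α : Matrix (Fin n) (Fin n) ℂ) (β : Fin n → Fin n → Fin n → ℂ)
    (hα : α.IsHermitian)
    (hβ : ∀ ℓ, (Matrix.of fun j k => β j k ℓ).IsHermitian)
    (hstruct : ∀ j k, X j * X k = α j k • (1 : H →L[ℂ] H) + ∑ ℓ, β j k ℓ • X ℓ)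
    (τ : Fin n → ℝ)
    (hτ : ∀ ℓ, τ ℓ = (Matrix.trace (Matrix.of fun j k => β j k ℓ)).re) :
    0 ≤ (Matrix.trace α).re + (1 / 4) * ∑ ℓ, τ ℓ ^ 2 ∧
    ∀ k, ‖X k‖ ≤ (1 / 2) * |τ k| +
      Real.sqrt ((Matrix.trace α).re + (1 / 4) * ∑ ℓ, τ ℓ ^ 2) := by
  set c := (Matrix.trace α).re + (1 / 4) * ∑ ℓ, τ ℓ ^ 2
  set Y : Fin n → H →L[ℂ] H := fun ℓ => X ℓ - ((τ ℓ : ℂ) / 2) • 1 with hY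
  have htrα : ∑ j, α j j = (α.trace.re : ℂ) := hα.ofReal_re_trace.symm
  have htrβ : ∀ ℓ, ∑ j, β j j ℓ = τ ℓ := fun ℓ => by
    rw [hτ ℓ]
    exact (hβ ℓ).ofReal_re_trace.symm
  have hsaY : ∀ ℓ, IsSelfAdjoint (Y ℓ) := fun ℓ =>
    (hsa ℓ).sub (.smul (by simp [isSelfAdjoint_iff]) (.one _))
  have hsumY : ∑ ℓ, Y ℓ * Y ℓ = (c : ℂ) • 1 := by
    have hsumX := sum_mul_self_eq_of_mul_self_eq (fun j => α j j) (fun j ℓ => β j j ℓ)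
      fun j => hstruct j j
    simp only [htrα, htrβ] at hsumX
    rw [sum_sub_half_smul_one_mul_self hsumX]
    push_cast [c]
    rfl
  refine ⟨nonneg_of_sum_mul_self_eq hsaY hsumY, fun k => ?_⟩
  calc ‖X k‖ = ‖Y k + ((τ k : ℂ) / 2) • 1‖ := by rw [hY, sub_add_cancel]
    _ ≤ ‖Y k‖ + ‖((τ k : ℂ) / 2) • (1 : H →L[ℂ] H)‖ := norm_add_le _ _
    _ ≤ √c + (1 / 2) * |τ k| := by
      gcongr
      · exact norm_le_sqrt_of_sum_mul_self_eq hsaY hsumY k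
      · simp [norm_smul, div_eq_inv_mul]
    _ = (1 / 2) * |τ k| + √c := add_comm _ _
end

section
/- Let H be a complex Hilbert space and X_1,…,X_n bounded self-adjoint operators on H satisfying the algebraic structure X_j X_k = α_{jk}·I + Σ_{ℓ=1}^n β_{jkℓ}·X_ℓ for all j,k, where α ∈ ℂ^{n×n} is Hermitian and each section β_ℓ := (β_{jkℓ})_{j,k} ∈ ℂ^{n×n} is Hermitian. Set τ_ℓ := Tr β_ℓ ∈ ℝ. Then for every unit vector ψ ∈ H, the mean values μ_k := ⟨ψ, X_k ψ⟩ (which are real) satisfy Σ_{k=1}^n (μ_k − τ_k/2)² ≤ Tr α + (1/4) Σ_{ℓ=1}^n τ_ℓ². -/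
/-!
Write `μ k = ⟪ψ, X k ψ⟫`, real since `X k` is self-adjoint. Cauchy–Schwarz gives
`μ k ^ 2 ≤ ‖X k ψ‖ ^ 2 = ⟪ψ, X k X k ψ⟫`, and the algebraic structure evaluates the right-hand
side as `α k k + ∑ ℓ β k k ℓ μ ℓ`. Summing over `k` yields `∑ μ k ^ 2 ≤ Tr α + ∑ τ ℓ μ ℓ`,
which is the claimed inequality after completing the square.
-/

open Finset RCLike

section InnerProductSpace

variable {𝕜 E : Type*} [RCLike 𝕜] [NormedAddCommGroup E] [InnerProductSpace 𝕜 E]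

theorem sq_re_inner_le_sq_norm_of_norm_eq_one {x : E} (hx : ‖x‖ = 1) (y : E) :
    re (inner 𝕜 x y) ^ 2 ≤ ‖y‖ ^ 2 := by
  rw [sq_le_sq, abs_norm]
  calc |re (inner 𝕜 x y)| ≤ ‖inner 𝕜 x y‖ := abs_re_le_norm _
    _ ≤ ‖x‖ * ‖y‖ := norm_inner_le_norm x y
    _ = ‖y‖ := by rw [hx, one_mul]

theorem IsSelfAdjoint.re_inner_self_mul_self_apply [CompleteSpace E] {T : E →L[𝕜] E}
    (hT : IsSelfAdjoint T) (x : E) :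
    re (inner 𝕜 x ((T * T) x)) = ‖T x‖ ^ 2 := by
  have hsymm : inner 𝕜 (T x) (T x) = inner 𝕜 x ((T * T) x) := hT.isSymmetric x (T x)
  rw [← hsymm, inner_self_eq_norm_sq]

theorem inner_self_apply_eq_of_eq_smul_one_add_sum {ι : Type*} {s : Finset ι}
    {A : E →L[𝕜] E} {a : 𝕜} {b : ι → 𝕜} {X : ι → E →L[𝕜] E}
    (hA : A = a • 1 + ∑ ℓ ∈ s, b ℓ • X ℓ) {x : E} (hx : ‖x‖ = 1) :
    inner 𝕜 x (A x) = a + ∑ ℓ ∈ s, b ℓ * inner 𝕜 x (X ℓ x) := by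
  simp [hA, inner_add_right, inner_smul_right, inner_sum, inner_self_eq_norm_sq_to_K, hx]

theorem sum_norm_sq_apply_eq_of_structure [CompleteSpace E] {n : ℕ} {X : Fin n → E →L[𝕜] E}
    (hsa : ∀ k, IsSelfAdjoint (X k)) {α : Matrix (Fin n) (Fin n) 𝕜}
    {β : Fin n → Fin n → Fin n → 𝕜}
    (hstruct : ∀ j k, X j * X k = α j k • (1 : E →L[𝕜] E) + ∑ ℓ, β j k ℓ • X ℓ)
    {ψ : E} (hψ : ‖ψ‖ = 1) :
    ∑ k, ‖X k ψ‖ ^ 2 = re α.trace +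
      ∑ ℓ, re (Matrix.of fun j k => β j k ℓ).trace * re (inner 𝕜 ψ (X ℓ ψ)) := by
  have him : ∀ ℓ, im (inner 𝕜 ψ (X ℓ ψ)) = 0 :=
    fun ℓ => (hsa ℓ).isSymmetric.im_inner_self_apply ψ
  calc ∑ k, ‖X k ψ‖ ^ 2 = ∑ k, re (inner 𝕜 ψ ((X k * X k) ψ)) := by
        simp only [(hsa _).re_inner_self_mul_self_apply]
    _ = ∑ k, (re (α k k) + ∑ ℓ, re (β k k ℓ) * re (inner 𝕜 ψ (X ℓ ψ))) := by
        refine sum_congr rfl fun k _ => ?_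
        rw [inner_self_apply_eq_of_eq_smul_one_add_sum (hstruct k k) hψ]
        simp [him]
    _ = _ := by
        rw [sum_add_distrib, sum_comm]
        simp [Matrix.trace, map_sum, sum_mul]

end InnerProductSpace

theorem sum_sq_sub_half_le_of_sum_sq_le {ι : Type*} [Fintype ι] {μ τ : ι → ℝ} {A : ℝ}
    (h : ∑ k, μ k ^ 2 ≤ A + ∑ k, τ k * μ k) :
    ∑ k, (μ k - τ k / 2) ^ 2 ≤ A + 1 / 4 * ∑ k, τ k ^ 2 := by
  have hexpand : ∑ k, (μ k - τ k / 2) ^ 2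
      = ∑ k, μ k ^ 2 - ∑ k, τ k * μ k + 1 / 4 * ∑ k, τ k ^ 2 := by
    rw [mul_sum, ← sum_sub_distrib, ← sum_add_distrib]
    exact sum_congr rfl fun k _ => by ring
  linarith

theorem mean_values_in_ball_of_algebraic_structure_general
    {H : Type*} [NormedAddCommGroup H] [InnerProductSpace ℂ H] [CompleteSpace H]
    {n : ℕ} (X : Fin n → (H →L[ℂ] H))
    (hsa : ∀ k, IsSelfAdjoint (X k))
    (α : Matrix (Fin n) (Fin n) ℂ) (β : Fin n → Fin n → Fin n → ℂ)
    (hstruct : ∀ j k, X j * X k = α j k • (1 : H →L[ℂ] H) + ∑ ℓ, β j k ℓ • X ℓ)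
    (τ : Fin n → ℝ)
    (hτ : ∀ ℓ, τ ℓ = (Matrix.trace (Matrix.of fun j k => β j k ℓ)).re)
    (ψ : H) (hψ : ‖ψ‖ = 1) :
    (∀ k, ((inner ℂ ψ (X k ψ) : ℂ)).im = 0) ∧
    ∑ k, (((inner ℂ ψ (X k ψ) : ℂ)).re - τ k / 2) ^ 2
      ≤ (Matrix.trace α).re + (1 / 4) * ∑ ℓ, τ ℓ ^ 2 := by
  obtain rfl : τ = fun ℓ => (Matrix.of fun j k => β j k ℓ).trace.re := funext hτ
  refine ⟨fun k => (hsa k).isSymmetric.im_inner_self_apply ψ, ?_⟩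
  apply sum_sq_sub_half_le_of_sum_sq_le
  calc ∑ k, (inner ℂ ψ (X k ψ)).re ^ 2 ≤ ∑ k, ‖X k ψ‖ ^ 2 :=
        sum_le_sum fun k _ => sq_re_inner_le_sq_norm_of_norm_eq_one (𝕜 := ℂ) hψ (X k ψ)
    _ = _ := sum_norm_sq_apply_eq_of_structure hsa hstruct hψ

/-- for any unit vector `ψ`, the mean values `μ k = ⟨ψ, X k ψ⟩` of system
variables with the algebraic structure (Hermitian structure constants) are real and lie
in the ball of centre `τ/2` and squared radius `Tr α + (1/4)∑ τ_ℓ²`. -/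
theorem mean_values_in_ball_of_algebraic_structure
    {H : Type*} [NormedAddCommGroup H] [InnerProductSpace ℂ H] [CompleteSpace H]
    {n : ℕ} (X : Fin n → (H →L[ℂ] H))
    (hsa : ∀ k, IsSelfAdjoint (X k))
    (α : Matrix (Fin n) (Fin n) ℂ) (β : Fin n → Fin n → Fin n → ℂ)
    (hα : α.IsHermitian)
    (hβ : ∀ ℓ, (Matrix.of fun j k => β j k ℓ).IsHermitian)
    (hstruct : ∀ j k, X j * X k = α j k • (1 : H →L[ℂ] H) + ∑ ℓ, β j k ℓ • X ℓ)
    (τ : Fin n → ℝ)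
    (hτ : ∀ ℓ, τ ℓ = (Matrix.trace (Matrix.of fun j k => β j k ℓ)).re)
    (ψ : H) (hψ : ‖ψ‖ = 1) :
    (∀ k, ((inner ℂ ψ (X k ψ) : ℂ)).im = 0) ∧
    ∑ k, (((inner ℂ ψ (X k ψ) : ℂ)).re - τ k / 2) ^ 2
      ≤ (Matrix.trace α).re + (1 / 4) * ∑ ℓ, τ ℓ ^ 2 :=
  mean_values_in_ball_of_algebraic_structure_general X hsa α β hstruct τ hτ ψ hψ
end

section
/- Let H be a complex Hilbert space and X_1,…,X_n bounded self-adjoint operators on H satisfying the algebraic structure X_j X_k = α_{jk}·I + Σ_{ℓ=1}^n β_{jkℓ}·X_ℓ for all j,k, with structure constants α ∈ ℂ^{n×n}, β ∈ ℂ^{n×n×n}. For u ∈ ℂⁿ, let S := Σ_{k=1}^n u_k X_k and let T(u) ∈ ℂ^{(n+1)×(n+1)} be the block matrix with (0,0) entry 0, top-right row uᵀ, bottom-left column αu, and bottom-right n×n block β⋄u, where (β⋄u)_{jℓ} := Σ_{k=1}^n β_{jkℓ} u_k. Then for every natural number r, S^r = (T(u)^r)_{00}·I + Σ_{ℓ=1}^n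 (T(u)^r)_{0ℓ}·X_ℓ, where indices of the (n+1)×(n+1) matrix run over {0,1,…,n}. -/
/-- The `(n+1)×(n+1)` matrix `T(u)` (indexed by `Option (Fin n)`, with `none` playing the
role of the index `0`): `(0,0)` entry `0`, top-right row `uᵀ`, bottom-left column `α u`,
and bottom-right block `β ⋄ u` with entries `(β ⋄ u)_{jℓ} = ∑ k, β j k ℓ * u k`. -/
noncomputable def structTMat {n : ℕ} (α : Matrix (Fin n) (Fin n) ℂ)
    (β : Fin n → Fin n → Fin n → ℂ) (u : Fin n → ℂ) :
    Matrix (Option (Fin n)) (Option (Fin n)) ℂ :=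
  Matrix.of fun i j =>
    match i, j with
    | none, none => 0
    | none, some k => u k
    | some j', none => ∑ k, α j' k * u k
    | some j', some ℓ => ∑ k, β j' k ℓ * u k

/-!
For `c ∈ ℂ^{n+1}` let `φ(c) := c₀ • 1 + ∑ ℓ, c_ℓ • X ℓ` (`affineComb X c`). The structure
relations say exactly that right multiplication by `S = ∑ k, u k • X k` acts on coefficient
vectors as the matrix `T(u)`: `φ(c) * S = φ(c ᵥ* T(u))`. Iterating from `c = e₀`, where
`φ(e₀) = 1`, gives `S ^ r = φ(e₀ ᵥ* T(u) ^ r)`, and `e₀ ᵥ* T(u) ^ r` is the first row of `T(u) ^ r`.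
-/

open Matrix

namespace StructTMat

variable {n : ℕ} {α : Matrix (Fin n) (Fin n) ℂ} {β : Fin n → Fin n → Fin n → ℂ}
  (u : Fin n → ℂ) (c : Option (Fin n) → ℂ)

theorem vecMul_structTMat_none :
    (c ᵥ* structTMat α β u) none = ∑ j, ∑ k, c (some j) * u k * α j k := by
  simp only [vecMul, dotProduct, Fintype.sum_option, structTMat, of_apply, mul_zero, zero_add,
    Finset.mul_sum]
  exact Finset.sum_congr rfl fun j _ => Finset.sum_congr rfl fun k _ => by ring

theorem vecMul_structTMat_some (ℓ : Fin n) :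
    (c ᵥ* structTMat α β u) (some ℓ) =
      c none * u ℓ + ∑ j, ∑ k, c (some j) * u k * β j k ℓ := by
  simp only [vecMul, dotProduct, Fintype.sum_option, structTMat, of_apply, Finset.mul_sum]
  congr 1
  exact Finset.sum_congr rfl fun j _ => Finset.sum_congr rfl fun k _ => by ring

variable {A : Type*} [Ring A] [Algebra ℂ A] (X : Fin n → A)

noncomputable def affineComb (c : Option (Fin n) → ℂ) : A :=
  c none • 1 + ∑ ℓ, c (some ℓ) • X ℓ

theorem affineComb_single_none : affineComb X (Pi.single none 1) = 1 := by
  simp [affineComb]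

variable {X}

theorem affineComb_mul_sum
    (hstruct : ∀ j k, X j * X k = α j k • (1 : A) + ∑ ℓ, β j k ℓ • X ℓ) :
    affineComb X c * ∑ k, u k • X k = affineComb X (c ᵥ* structTMat α β u) := by
  have hprod : ∀ j k, (c (some j) • X j) * (u k • X k)
      = (c (some j) * u k * α j k) • (1 : A) + ∑ ℓ, (c (some j) * u k * β j k ℓ) • X ℓ := by
    intro j k
    rw [smul_mul_smul, hstruct, smul_add, smul_smul, Finset.smul_sum]
    simp only [smul_smul]
  simp only [affineComb, add_mul, smul_one_mul, Finset.sum_mul]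
  simp only [Finset.mul_sum, hprod, Finset.sum_add_distrib, Finset.smul_sum, smul_smul]
  rw [Finset.sum_comm_cycle]
  simp only [vecMul_structTMat_none, vecMul_structTMat_some, add_smul, Finset.sum_smul,
    Finset.sum_add_distrib]
  abel

theorem affineComb_mul_sum_pow
    (hstruct : ∀ j k, X j * X k = α j k • (1 : A) + ∑ ℓ, β j k ℓ • X ℓ) (r : ℕ) :
    affineComb X c * (∑ k, u k • X k) ^ r = affineComb X (c ᵥ* structTMat α β u ^ r) := by
  induction r generalizing c with
  | zero => simp
  | succ r ih =>
    rw [pow_succ', ← mul_assoc, affineComb_mul_sum u c hstruct, ih, vecMul_vecMul, pow_succ']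

end StructTMat

open StructTMat in
theorem pow_reduction_of_algebraic_structure_general
    {H : Type*} [NormedAddCommGroup H] [InnerProductSpace ℂ H]
    {n : ℕ} (X : Fin n → (H →L[ℂ] H))
    (α : Matrix (Fin n) (Fin n) ℂ) (β : Fin n → Fin n → Fin n → ℂ)
    (hstruct : ∀ j k, X j * X k = α j k • (1 : H →L[ℂ] H) + ∑ ℓ, β j k ℓ • X ℓ)
    (u : Fin n → ℂ) :
    ∀ r : ℕ,
      (∑ k, u k • X k) ^ r
        = ((structTMat α β u) ^ r) none none • (1 : H →L[ℂ] H)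
          + ∑ ℓ, ((structTMat α β u) ^ r) none (some ℓ) • X ℓ := by
  intro r
  have h := affineComb_mul_sum_pow u (Pi.single none 1) hstruct r
  rw [affineComb_single_none, one_mul, single_one_vecMul] at h
  exact h

/-- powers of `S = ∑ u k • X k` reduce to affine functions of the system
variables, with coefficients read off the first row of the matrix power `T(u)^r`. -/
theorem pow_reduction_of_algebraic_structure
    {H : Type*} [NormedAddCommGroup H] [InnerProductSpace ℂ H] [CompleteSpace H]
    {n : ℕ} (X : Fin n → (H →L[ℂ] H))
    (hsa : ∀ k, IsSelfAdjoint (X k))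
    (α : Matrix (Fin n) (Fin n) ℂ) (β : Fin n → Fin n → Fin n → ℂ)
    (hstruct : ∀ j k, X j * X k = α j k • (1 : H →L[ℂ] H) + ∑ ℓ, β j k ℓ • X ℓ)
    (u : Fin n → ℂ) :
    ∀ r : ℕ,
      (∑ k, u k • X k) ^ r
        = ((structTMat α β u) ^ r) none none • (1 : H →L[ℂ] H)
          + ∑ ℓ, ((structTMat α β u) ^ r) none (some ℓ) • X ℓ :=
  pow_reduction_of_algebraic_structure_general X α β hstruct u
end

section
/- Let H be a complex Hilbert space and X_1,…,X_n bounded self-adjoint operators on H satisfying the algebraic structure X_j X_k = α_{jk}·I + Σ_{ℓ=1}^n β_{jkℓ}·X_ℓ for all j,k, with structure constants α ∈ ℂ^{n×n}, β ∈ ℂ^{n×n×n}. For u ∈ ℂⁿ, let S := Σ_{k=1}^n u_k X_k and let T(u) ∈ ℂ^{(n+1)×(n+1)} be the block matrix with (0,0) entry 0, top-right row uᵀ, bottom-left column αu, and bottom-right n×n block β⋄u, where (β⋄u)_{jℓ} := Σ_{k=1}^n β_{jkℓ} u_k. Then the operator exponential satisfies exp(S) = (exp T(u))_{00}·I + Σ_{ℓ=1}^n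 (exp T(u))_{0ℓ}·X_ℓ, where exp(S) is the exponential of the bounded operator S and exp T(u) is the matrix exponential, with indices of the (n+1)×(n+1) matrix running over {0,1,…,n}. -/
open NormedSpace
open scoped Nat

theorem map_pow_of_map_mul {M N : Type*} [Monoid M] [Monoid N] (f : M → N) {x : M} {y : N}
    (h_one : f 1 = 1) (h_mul : ∀ a, f (a * x) = f a * y) (m : ℕ) : f (x ^ m) = y ^ m := by
  induction m with
  | zero => simpa using h_one
  | succ m ih => rw [pow_succ, pow_succ, h_mul, ih]

theorem map_exp_of_map_mul {𝕂 A B : Type*} [Field 𝕂] [CharZero 𝕂]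
    [Ring A] [Algebra 𝕂 A] [TopologicalSpace A] [IsTopologicalRing A]
    [Ring B] [Algebra 𝕂 B] [TopologicalSpace B] [IsTopologicalRing B] [T2Space B]
    (f : A →L[𝕂] B) {x : A} {y : B} (h_one : f 1 = 1) (h_mul : ∀ a, f (a * x) = f a * y)
    (hx : Summable fun n => (n !⁻¹ : 𝕂) • x ^ n) : f (exp x) = exp y := by
  rw [exp_eq_tsum 𝕂, exp_eq_tsum 𝕂, f.map_tsum hx]
  simp only [map_smul, map_pow_of_map_mul f h_one h_mul]

-- The statement is purely topological; the operator norm only serves to make the matrices a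
-- complete normed algebra.
open scoped Matrix.Norms.Operator in
theorem Matrix.expSeries_summable {𝕂 ι : Type*} [RCLike 𝕂] [Fintype ι] [DecidableEq ι]
    (A : Matrix ι ι 𝕂) : Summable fun n => (n !⁻¹ : 𝕂) • A ^ n :=
  expSeries_summable' A

section firstRowEval

variable {B : Type*} [Ring B] [Algebra ℂ B] {n : ℕ}

noncomputable def firstRowEval (X : Fin n → B) :
    Matrix (Option (Fin n)) (Option (Fin n)) ℂ →ₗ[ℂ] B where
  toFun M := M none none • 1 + ∑ ℓ, M none (some ℓ) • X ℓ
  map_add' M N := by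
    simp only [Matrix.add_apply, add_smul, Finset.sum_add_distrib]
    abel
  map_smul' c M := by
    simp only [Matrix.smul_apply, smul_eq_mul, mul_smul, Finset.smul_sum, smul_add,
      RingHom.id_apply]

theorem firstRowEval_apply (X : Fin n → B) (M : Matrix (Option (Fin n)) (Option (Fin n)) ℂ) :
    firstRowEval X M = M none none • 1 + ∑ ℓ, M none (some ℓ) • X ℓ := rfl

theorem firstRowEval_one (X : Fin n → B) : firstRowEval X 1 = 1 := by
  simp [firstRowEval_apply]

theorem sum_smul_mul_sum_smul {X : Fin n → B} {α : Matrix (Fin n) (Fin n) ℂ}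
    {β : Fin n → Fin n → Fin n → ℂ}
    (hstruct : ∀ j k, X j * X k = α j k • (1 : B) + ∑ ℓ, β j k ℓ • X ℓ) (a b : Fin n → ℂ) :
    (∑ j, a j • X j) * (∑ k, b k • X k)
      = (∑ j, a j * ∑ k, α j k * b k) • 1 + ∑ ℓ, (∑ j, a j * ∑ k, β j k ℓ * b k) • X ℓ := by
  rw [Finset.sum_mul_sum]
  simp only [smul_mul_smul_comm, hstruct, smul_add, Finset.sum_add_distrib,
    Finset.smul_sum, smul_smul, Finset.mul_sum, Finset.sum_smul]
  simp only [mul_assoc, mul_comm (b _)]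
  congr 1
  exact (Finset.sum_congr rfl fun j _ => Finset.sum_comm).trans Finset.sum_comm

theorem firstRowEval_mul_structTMat {X : Fin n → B} {α : Matrix (Fin n) (Fin n) ℂ}
    {β : Fin n → Fin n → Fin n → ℂ}
    (hstruct : ∀ j k, X j * X k = α j k • (1 : B) + ∑ ℓ, β j k ℓ • X ℓ) (u : Fin n → ℂ)
    (M : Matrix (Option (Fin n)) (Option (Fin n)) ℂ) :
    firstRowEval X (M * structTMat α β u) = firstRowEval X M * ∑ k, u k • X k := by
  simp only [firstRowEval_apply, add_mul, smul_mul_assoc, one_mul, sum_smul_mul_sum_smul hstruct,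
    Matrix.mul_apply, structTMat, Fintype.sum_option, Matrix.of_apply, mul_zero, zero_add,
    add_smul, Finset.sum_add_distrib, Finset.smul_sum, smul_smul]
  abel

end firstRowEval

theorem exp_reduction_of_algebraic_structure_general
    {H : Type*} [NormedAddCommGroup H] [InnerProductSpace ℂ H]
    {n : ℕ} (X : Fin n → (H →L[ℂ] H))
    (α : Matrix (Fin n) (Fin n) ℂ) (β : Fin n → Fin n → Fin n → ℂ)
    (hstruct : ∀ j k, X j * X k = α j k • (1 : H →L[ℂ] H) + ∑ ℓ, β j k ℓ • X ℓ)
    (u : Fin n → ℂ) :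
    NormedSpace.exp (∑ k, u k • X k)
      = (NormedSpace.exp (structTMat α β u)) none none • (1 : H →L[ℂ] H)
        + ∑ ℓ, (NormedSpace.exp (structTMat α β u)) none (some ℓ) • X ℓ :=
  (map_exp_of_map_mul (LinearMap.toContinuousLinearMap (firstRowEval X)) (firstRowEval_one X)
    (firstRowEval_mul_structTMat hstruct u) (Matrix.expSeries_summable _)).symm

/-- the operator exponential of `S = ∑ u k • X k` reduces to an affine
function of the system variables, with coefficients read off the first row of the matrix
exponential `exp T(u)`. -/
theorem exp_reduction_of_algebraic_structure
    {H : Type*} [NormedAddCommGroup H] [InnerProductSpace ℂ H] [CompleteSpace H]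
    {n : ℕ} (X : Fin n → (H →L[ℂ] H))
    (hsa : ∀ k, IsSelfAdjoint (X k))
    (α : Matrix (Fin n) (Fin n) ℂ) (β : Fin n → Fin n → Fin n → ℂ)
    (hstruct : ∀ j k, X j * X k = α j k • (1 : H →L[ℂ] H) + ∑ ℓ, β j k ℓ • X ℓ)
    (u : Fin n → ℂ) :
    NormedSpace.exp (∑ k, u k • X k)
      = (NormedSpace.exp (structTMat α β u)) none none • (1 : H →L[ℂ] H)
        + ∑ ℓ, (NormedSpace.exp (structTMat α β u)) none (some ℓ) • X ℓ :=
  exp_reduction_of_algebraic_structure_general X α β hstruct u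
end

section
/- Let H be a complex Hilbert space and X_1,…,X_n bounded self-adjoint operators on H satisfying the algebraic structure X_j X_k = α_{jk}·I + Σ_{ℓ=1}^n β_{jkℓ}·X_ℓ for all j,k, with structure constants α ∈ ℂ^{n×n}, β ∈ ℂ^{n×n×n}. For u ∈ ℝⁿ, let T(u) ∈ ℂ^{(n+1)×(n+1)} be the block matrix with (0,0) entry 0, top-right row uᵀ, bottom-left column αu, and bottom-right n×n block β⋄u, where (β⋄u)_{jℓ} := Σ_{k=1}^n β_{jkℓ} u_k. Then for every unit vector ψ ∈ H, the quasi-characteristic function satisfies ⟨ψ, exp(i Σ_{k=1}^n u_k X_k) ψ⟩ = (exp(i T(u)))_{00} + Σ_{ℓ=1}^n (exp(i T(u)))_{0ℓ} μ_ℓ, where μ_ℓ := ⟨ψ, X_ℓ ψ⟩ and indices of the (n+1)×(n+1) matrix run over {0,1,…,n}. -/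
open NormedSpace

section Intertwining

variable {κ : Type*} [Fintype κ] [DecidableEq κ]

theorem mul_pow_eq_sum_of_mul_eq_sum {R 𝔸 : Type*} [CommSemiring R] [Semiring 𝔸]
    [Algebra R 𝔸] {Y : κ → 𝔸} {a : 𝔸} {T : Matrix κ κ R}
    (h : ∀ i, Y i * a = ∑ j, T i j • Y j) (m : ℕ) (i : κ) :
    Y i * a ^ m = ∑ j, (T ^ m) i j • Y j := by
  induction m generalizing i with
  | zero => simp [Matrix.one_apply]
  | succ m ih =>
    calc Y i * a ^ (m + 1) = ∑ j, (T ^ m) i j • ∑ k, T j k • Y k := by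
          simp only [pow_succ, ← mul_assoc, ih, Finset.sum_mul, smul_mul_assoc, h]
      _ = ∑ k, (T ^ (m + 1)) i k • Y k := by
          simp only [pow_succ, Matrix.mul_apply, Finset.smul_sum, smul_smul, Finset.sum_smul]
          exact Finset.sum_comm

theorem mul_exp_eq_sum_of_mul_eq_sum {𝕂 𝔸 : Type*} [RCLike 𝕂] [NormedRing 𝔸]
    [NormedAlgebra 𝕂 𝔸] [CompleteSpace 𝔸] {Y : κ → 𝔸} {a : 𝔸} {T : Matrix κ κ 𝕂}
    (h : ∀ i, Y i * a = ∑ j, T i j • Y j) (i : κ) :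
    Y i * exp a = ∑ j, exp T i j • Y j := by
  let L : Matrix κ κ 𝕂 →L[𝕂] 𝔸 := LinearMap.toContinuousLinearMap
    { toFun := fun M => ∑ j, M i j • Y j
      map_add' := fun M N => by simp [add_smul, Finset.sum_add_distrib]
      map_smul' := fun c M => by simp [Finset.smul_sum, smul_smul] }
  -- Matrices carry no global norm; any normed-algebra structure inducing the product topology
  -- supplies the summability of the exponential series.
  have hT : HasSum (fun m : ℕ => (m.factorial⁻¹ : 𝕂) • T ^ m) (exp T) := by
    open scoped Matrix.Norms.Operator in exact exp_series_hasSum_exp' T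
  have hL : ∀ M, L M = ∑ j, M i j • Y j := fun _ => rfl
  have hterm (m : ℕ) : L ((m.factorial⁻¹ : 𝕂) • T ^ m) = Y i * ((m.factorial⁻¹ : 𝕂) • a ^ m) := by
    simp only [hL, mul_smul_comm, mul_pow_eq_sum_of_mul_eq_sum h, Finset.smul_sum,
      Matrix.smul_apply, smul_eq_mul, smul_smul]
  rw [← hL]
  refine ((exp_series_hasSum_exp' (𝕂 := 𝕂) a).mul_left (Y i)).unique ?_
  simpa only [hterm] using hT.mapL L

end Intertwining

section StructureConstants

variable {n : ℕ} (α : Matrix (Fin n) (Fin n) ℂ) (β : Fin n → Fin n → Fin n → ℂ)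

theorem structTMat_smul (c : ℂ) (u : Fin n → ℂ) :
    structTMat α β (c • u) = c • structTMat α β u := by
  ext (_ | j) (_ | ℓ) <;> simp [structTMat, Finset.mul_sum, mul_left_comm]

theorem mul_sum_smul_eq_sum_structTMat {𝔸 : Type*} [Ring 𝔸] [Algebra ℂ 𝔸] {X : Fin n → 𝔸}
    (hstruct : ∀ j k, X j * X k = α j k • (1 : 𝔸) + ∑ ℓ, β j k ℓ • X ℓ) (u : Fin n → ℂ)
    (i : Option (Fin n)) :
    i.elim 1 X * ∑ k, u k • X k = ∑ j, structTMat α β u i j • j.elim 1 X := by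
  cases i with
  | none => simp [Fintype.sum_option, structTMat]
  | some j =>
    simp only [Option.elim_some, Finset.mul_sum, mul_smul_comm, hstruct, Fintype.sum_option,
      Option.elim_none, structTMat, Matrix.of_apply, smul_add, Finset.smul_sum, smul_smul,
      Finset.sum_add_distrib, Finset.sum_smul]
    rw [Finset.sum_comm (s := Finset.univ)]
    simp [mul_comm]

end StructureConstants

theorem qcf_reduction_of_algebraic_structure_general
    {H : Type*} [NormedAddCommGroup H] [InnerProductSpace ℂ H] [CompleteSpace H]
    {n : ℕ} (X : Fin n → (H →L[ℂ] H))
    (α : Matrix (Fin n) (Fin n) ℂ) (β : Fin n → Fin n → Fin n → ℂ)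
    (hstruct : ∀ j k, X j * X k = α j k • (1 : H →L[ℂ] H) + ∑ ℓ, β j k ℓ • X ℓ)
    (u : Fin n → ℝ) (ψ : H) (hψ : ‖ψ‖ = 1) :
    (inner ℂ ψ ((NormedSpace.exp (Complex.I • ∑ k, ((u k : ℝ) : ℂ) • X k)) ψ) : ℂ)
      = (NormedSpace.exp
            (Complex.I • structTMat α β (fun k => ((u k : ℝ) : ℂ)))) none none
        + ∑ ℓ, (NormedSpace.exp
            (Complex.I • structTMat α β (fun k => ((u k : ℝ) : ℂ)))) none (some ℓ)
          * (inner ℂ ψ (X ℓ ψ) : ℂ) := by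
  set v : Fin n → ℂ := Complex.I • fun k => ((u k : ℝ) : ℂ)
  have hA : Complex.I • ∑ k, ((u k : ℝ) : ℂ) • X k = ∑ k, v k • X k := by
    simp only [v, Finset.smul_sum, smul_smul, Pi.smul_apply, smul_eq_mul]
  have hexp := mul_exp_eq_sum_of_mul_eq_sum (mul_sum_smul_eq_sum_structTMat α β hstruct v) none
  rw [← hA, structTMat_smul, Fintype.sum_option] at hexp
  simp only [Option.elim_none, Option.elim_some, one_mul] at hexp
  have hψψ : (inner ℂ ψ ψ : ℂ) = 1 := by simp [inner_self_eq_norm_sq_to_K, hψ]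
  simp only [hexp, add_apply, sum_apply, smul_apply, one_apply_eq_self, inner_add_right,
    inner_sum, inner_smul_right, hψψ, mul_one]

/-- the quasi-characteristic function of the system variables in a pure
state `ψ` is an affine function of the mean values `μ ℓ = ⟨ψ, X ℓ ψ⟩`, with coefficients
read off the first row of the matrix exponential `exp (i T(u))`. -/
theorem qcf_reduction_of_algebraic_structure
    {H : Type*} [NormedAddCommGroup H] [InnerProductSpace ℂ H] [CompleteSpace H]
    {n : ℕ} (X : Fin n → (H →L[ℂ] H))
    (hsa : ∀ k, IsSelfAdjoint (X k))
    (α : Matrix (Fin n) (Fin n) ℂ) (β : Fin n → Fin n → Fin n → ℂ)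
    (hstruct : ∀ j k, X j * X k = α j k • (1 : H →L[ℂ] H) + ∑ ℓ, β j k ℓ • X ℓ)
    (u : Fin n → ℝ) (ψ : H) (hψ : ‖ψ‖ = 1) :
    (inner ℂ ψ ((NormedSpace.exp (Complex.I • ∑ k, ((u k : ℝ) : ℂ) • X k)) ψ) : ℂ)
      = (NormedSpace.exp
            (Complex.I • structTMat α β (fun k => ((u k : ℝ) : ℂ)))) none none
        + ∑ ℓ, (NormedSpace.exp
            (Complex.I • structTMat α β (fun k => ((u k : ℝ) : ℂ)))) none (some ℓ)
          * (inner ℂ ψ (X ℓ ψ) : ℂ) :=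
  qcf_reduction_of_algebraic_structure_general X α β hstruct u ψ hψ
end
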